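/- If a set of Wang tiles T admits a valid tiling of ℤ², then the linear system (⋆⋆)' admits a nontrivial nonnegative solution: there exist nonnegative reals x_i, not all zero, indexed by tiles τ_i ∈ T, such that for every generator g ∈ {e₁, e₂} and every color c, the sum of x_i over tiles τ_i with τ_i(g) = c equals the sum of x_j over tiles τ_j with τ_j(g⁻¹) = c. -/

import Mathlib

/-!
Average the tiling over the squares `[0, n)²`: the empirical tile frequencies are probability
vectors on `T`. Matching colours along edges pair each cell with colour `c` on side `eᵢ` with
its `eᵢ`-neighbour, which has colour `c` on side `-eᵢ`; inside the square the two counts can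
only differ on one boundary row or column, i.e. by at most `n` out of `n²` cells. So the
frequencies solve (⋆⋆)' up to an error `1/n`, and a limit point in the (compact) standard
simplex is an exact nonnegative solution of total mass one.
-/

/-- The group element of `ℤ²` corresponding to a direction: `(i, true)` is the
generator `eᵢ`, `(i, false)` its inverse. -/
def dirZ2 : Fin 2 × Bool → ℤ × ℤ
  | (0, true) => (1, 0)
  | (0, false) => (-1, 0)
  | (1, true) => (0, 1)
  | (1, false) => (0, -1)

def invDir : Fin 2 × Bool → Fin 2 × Bool
  | (i, b) => (i, !b)

open Finset Filter Topology

theorem IsCompact.exists_eq_of_tendsto {X Y : Type*} [TopologicalSpace X] [TopologicalSpace Y]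
    [T2Space Y] {K : Set X} (hK : IsCompact K) {f : X → Y} (hf : Continuous f) {u : ℕ → X}
    (hu : ∀ n, u n ∈ K) {y : Y} (h : Tendsto (f ∘ u) atTop (𝓝 y)) : ∃ w ∈ K, f w = y :=
  (hK.image hf).isClosed.mem_of_tendsto h (Eventually.of_forall fun n => ⟨u n, hu n, rfl⟩)

namespace Finset

variable {α : Type*} [DecidableEq α]

theorem card_filter_le_card_filter_add_card_sdiff (s t : Finset α) (q : α → Prop)
    [DecidablePred q] : #(s.filter q) ≤ #(t.filter q) + #(s \ t) := by
  have hsub : s.filter q \ t.filter q ⊆ s \ t := by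
    intro p
    simp only [mem_sdiff, mem_filter]
    tauto
  calc #(s.filter q) ≤ #(s.filter q \ t.filter q) + #(t.filter q) := card_le_card_sdiff_add_card
    _ ≤ #(t.filter q) + #(s \ t) := by rw [add_comm]; gcongr

theorem abs_card_filter_sub_card_filter_le {s t : Finset α} (hst : #s = #t) (q : α → Prop)
    [DecidablePred q] : |(#(s.filter q) : ℝ) - #(t.filter q)| ≤ #(s \ t) := by
  have hst' : (#(s.filter q) : ℝ) ≤ #(t.filter q) + #(s \ t) := by
    exact_mod_cast card_filter_le_card_filter_add_card_sdiff s t q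
  have hts : (#(t.filter q) : ℝ) ≤ #(s.filter q) + #(s \ t) := by
    rw [card_sdiff_comm hst]
    exact_mod_cast card_filter_le_card_filter_add_card_sdiff t s q
  rw [abs_sub_le_iff]
  constructor <;> linarith

theorem abs_card_filter_add_sub_card_filter_le [Add α] [IsRightCancelAdd α] (s : Finset α)
    (d : α) (q : α → Prop) [DecidablePred q] :
    |(#{p ∈ s | q (p + d)} : ℝ) - #(s.filter q)| ≤ #(s.image (· + d) \ s) := by
  have hcard : #(s.image (· + d)) = #s := card_image_of_injective s (add_left_injective d)
  have hshift : #{p ∈ s | q (p + d)} = #((s.image (· + d)).filter q) := by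
    rw [filter_image, card_image_of_injective _ (add_left_injective d)]
  rw [hshift]
  exact abs_card_filter_sub_card_filter_le hcard q

end Finset

namespace WangTiling

noncomputable def square (n : ℕ) : Finset (ℤ × ℤ) := Ico 0 (n : ℤ) ×ˢ Ico 0 (n : ℤ)

theorem card_square (n : ℕ) : #(square n) = n ^ 2 := by
  simp [square, card_product, sq]

theorem card_image_add_dirZ2_sdiff_square_le (n : ℕ) (i : Fin 2) :
    #((square n).image (· + dirZ2 (i, true)) \ square n) ≤ n := by
  fin_cases i
  · calc _ ≤ #({(n : ℤ)} ×ˢ Ico (0 : ℤ) n) := card_le_card fun p => by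
          simp only [square, dirZ2, Finset.mem_sdiff, mem_image, mem_product, mem_Ico,
            mem_singleton, Prod.ext_iff, Prod.fst_add, Prod.snd_add]
          omega
      _ = n := by simp
  · calc _ ≤ #(Ico (0 : ℤ) n ×ˢ {(n : ℤ)}) := card_le_card fun p => by
          simp only [square, dirZ2, Finset.mem_sdiff, mem_image, mem_product, mem_Ico,
            mem_singleton, Prod.ext_iff, Prod.fst_add, Prod.snd_add]
          omega
      _ = n := by simp

noncomputable def empiricalFreq {G T : Type*} [DecidableEq T] (x : G → T) (s : Finset G)
    (t : T) : ℝ :=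
  #{p ∈ s | x p = t} / #s

variable {G T : Type*} [Fintype T] [DecidableEq T]

theorem sum_filter_empiricalFreq (x : G → T) (s : Finset G) (P : T → Prop) [DecidablePred P] :
    ∑ t ∈ univ.filter P, empiricalFreq x s t = #{p ∈ s | P (x p)} / #s := by
  simp only [empiricalFreq, ← sum_div, ← Nat.cast_sum, sum_card_fiberwise_eq_card_filter,
    mem_filter, mem_univ, true_and]

theorem empiricalFreq_mem_stdSimplex (x : G → T) {s : Finset G} (hs : s.Nonempty) :
    empiricalFreq x s ∈ stdSimplex ℝ T := by
  refine ⟨fun t => by unfold empiricalFreq; positivity, ?_⟩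
  have := sum_filter_empiricalFreq x s fun _ => True
  simp only [Finset.filter_true] at this
  rw [this, div_self (by exact_mod_cast hs.card_pos.ne')]

theorem abs_sum_empiricalFreq_sub_le {C : Type*} [DecidableEq C] (tile : T → Fin 2 × Bool → C)
    (x : ℤ × ℤ → T)
    (hx : ∀ (g : ℤ × ℤ) (s : Fin 2 × Bool), tile (x g) s = tile (x (g + dirZ2 s)) (invDir s))
    (n : ℕ) (i : Fin 2) (c : C) :
    |∑ t ∈ univ.filter (fun t => tile t (i, true) = c), empiricalFreq x (square (n + 1)) t -
      ∑ t ∈ univ.filter (fun t => tile t (i, false) = c), empiricalFreq x (square (n + 1)) t|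
      ≤ 1 / (n + 1) := by
  have hmatch : {p ∈ square (n + 1) | tile (x p) (i, true) = c} =
      {p ∈ square (n + 1) | tile (x (p + dirZ2 (i, true))) (i, false) = c} := by
    simp only [hx _ (i, true), invDir, Bool.not_true]
  have hdefect := (abs_card_filter_add_sub_card_filter_le (square (n + 1)) (dirZ2 (i, true))
    fun p => tile (x p) (i, false) = c).trans
      (Nat.cast_le.2 (card_image_add_dirZ2_sdiff_square_le (n + 1) i))
  rw [sum_filter_empiricalFreq, sum_filter_empiricalFreq, ← sub_div, abs_div, hmatch,
    card_square, Nat.abs_cast]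
  push_cast at hdefect ⊢
  calc _ ≤ ((n : ℝ) + 1) / ((n : ℝ) + 1) ^ 2 := by gcongr
    _ = 1 / (n + 1) := by field_simp

end WangTiling

open WangTiling in
/-- If a finite set of Wang tiles (maps from directions to colors) admits a valid tiling of
`ℤ²`, then condition (⋆⋆)' holds: there is a nontrivial nonnegative solution `w` such that
for each generator and color, the total weight of tiles with that color on that side equals
the total weight of tiles with that color on the opposite side. -/
theorem wang_tiling_Z2_satisfies_starstar' {C T : Type*} [Fintype T] [DecidableEq C]
    (tile : T → Fin 2 × Bool → C) (x : ℤ × ℤ → T)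
    (hx : ∀ (g : ℤ × ℤ) (s : Fin 2 × Bool),
      tile (x g) s = tile (x (g + dirZ2 s)) (invDir s)) :
    ∃ w : T → ℝ, (∀ t, 0 ≤ w t) ∧ (∃ t, w t ≠ 0) ∧
      ∀ (i : Fin 2) (c : C),
        ∑ t ∈ Finset.univ.filter (fun t => tile t (i, true) = c), w t =
          ∑ t ∈ Finset.univ.filter (fun t => tile t (i, false) = c), w t := by
  classical
  let defect : (T → ℝ) → Fin 2 × C → ℝ := fun w ic =>
    ∑ t ∈ univ.filter (fun t => tile t (ic.1, true) = ic.2), w t -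
      ∑ t ∈ univ.filter (fun t => tile t (ic.1, false) = ic.2), w t
  have hdefect : Continuous defect := by fun_prop
  have hfreq (n : ℕ) : empiricalFreq x (square (n + 1)) ∈ stdSimplex ℝ T :=
    empiricalFreq_mem_stdSimplex x ⟨0, by simp [square]⟩
  have hlim : Tendsto (fun n => defect (empiricalFreq x (square (n + 1)))) atTop (𝓝 0) :=
    tendsto_pi_nhds.2 fun ic => squeeze_zero_norm
      (fun n => abs_sum_empiricalFreq_sub_le tile x hx n ic.1 ic.2)
      tendsto_one_div_add_atTop_nhds_zero_nat
  obtain ⟨w, ⟨hw_nonneg, hw_sum⟩, hw⟩ := (isCompact_stdSimplex ℝ T).exists_eq_of_tendsto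
    hdefect hfreq hlim
  obtain ⟨t, -, ht⟩ := exists_ne_zero_of_sum_ne_zero (hw_sum ▸ one_ne_zero)
  exact ⟨w, hw_nonneg, ⟨t, ht⟩, fun i c => sub_eq_zero.1 (congrFun hw (i, c))⟩
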